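/- arXiv:2004.07057 — 4 statements merged into one kernel-verified Lean document; each statement's English description precedes it below -/
import Mathlib

section
/- Let n ≥ 1, let a_1, …, a_n ≥ 1 be integers with |a| = a_1 + ⋯ + a_n, let k be an integer with k ≤ |a|, and let L(x_1,…,x_n) be a Laurent polynomial in x_1,…,x_n over ℚ(q) (in particular independent of x_0 and of a_0). Then there exists a polynomial P(t) with coefficients in ℚ(q), of degree at most |a| − k − n (the zero polynomial if |a| − k − n < 0), such that for every integer a_0 ≥ 0, CT_x x_0^k · L(x_1,…,x_n) · D_n(x,a,q) = P(q^{a_0}). -/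
open Finset

noncomputable section

abbrev K : Type := RatFunc ℚ

abbrev LP (N : ℕ) : Type := AddMonoidAlgebra K (Fin N →₀ ℤ)

def q : K := RatFunc.X

def Xp {N : ℕ} (i : Fin N) : LP N := AddMonoidAlgebra.single (Finsupp.single i 1) 1

def Xi {N : ℕ} (i : Fin N) : LP N := AddMonoidAlgebra.single (Finsupp.single i (-1)) 1

def coeff {N : ℕ} (F : LP N) (m : Fin N →₀ ℤ) : K := F.coeff m

def CT {N : ℕ} (F : LP N) : K := coeff F 0

def Cq {N : ℕ} (c : K) : LP N := AddMonoidAlgebra.single 0 c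

def poch {N : ℕ} (z : LP N) (k : ℕ) : LP N := ∏ i ∈ Finset.range k, (1 - Cq (q ^ i) * z)

def qpoch (k : ℕ) : K := ∏ i ∈ Finset.range k, (1 - q ^ (i + 1))

def Dn {N : ℕ} (a : Fin N → ℕ) : LP N :=
  ∏ p ∈ Finset.univ.filter (fun p : Fin N × Fin N => p.1 < p.2),
    (poch (Xp p.1 * Xi p.2) (a p.1) * poch (Cq q * Xp p.2 * Xi p.1) (a p.2 - 1))

def EbarQ {n : ℕ} (Q : Finset (Fin n × Fin n)) (i j : Fin n) : Prop :=
  (i < j ∧ (i, j) ∉ Q) ∨ (j < i ∧ (j, i) ∈ Q)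

/-!
Splitting off the factors of `D_n` that involve `x_0` writes the integrand as
`x_0^k ∏_j (x_0/x_j)_{a_0}` times a Laurent polynomial `G` that does not depend on `a_0` and whose
monomials have `x_0`-exponent at least `n - |a|`. By the `q`-binomial theorem the coefficient of
`z^m` in `(z)_{a_0}` is a polynomial of degree `m` in `q^{a_0}` that vanishes for `m > a_0`. Hence
the constant term is `∑_m ∏_j P_{m_j}(q^{a_0}) ⋅ [x^{-k e_0 - ∑_j m_j (e_0 - e_j)}] G`, and only the
finitely many `m` with `k + ∑_j m_j ≤ |a| - n` contribute.
-/

namespace QDyson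

open Polynomial

variable {N n : ℕ}

lemma q_ne_zero : q ≠ 0 := RatFunc.X_ne_zero

lemma q_pow_succ_ne_one (m : ℕ) : q ^ (m + 1) ≠ 1 := by
  intro h
  have hpoly : q ^ (m + 1) = algebraMap ℚ[X] K (X ^ (m + 1)) := by
    simp [q, RatFunc.algebraMap_X]
  have := congrArg RatFunc.intDegree h
  rw [hpoly, RatFunc.intDegree_polynomial, natDegree_X_pow, RatFunc.intDegree_one] at this
  omega

def qbinomScale (m : ℕ) : K := ∏ i ∈ range m, q ^ i / (q ^ (i + 1) - 1)

/-- At `t = q^a` this is `(-1)^m q^(m(m-1)/2) [a, m]_q`, the coefficient of `z^m` in `(z)_a`. -/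
def qbinomPoly (m : ℕ) : K[X] := C (qbinomScale m) * ∏ i ∈ range m, (1 - C (q⁻¹ ^ i) * X)

lemma qbinomPoly_eval (m : ℕ) (t : K) :
    (qbinomPoly m).eval t = qbinomScale m * ∏ i ∈ range m, (1 - q⁻¹ ^ i * t) := by
  simp [qbinomPoly, eval_prod]

lemma qbinomPoly_zero : qbinomPoly 0 = 1 := by simp [qbinomPoly, qbinomScale]

lemma natDegree_qbinomPoly_le (m : ℕ) : (qbinomPoly m).natDegree ≤ m := by
  refine (natDegree_C_mul_le _ _).trans ((natDegree_prod_le _ _).trans ?_)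
  refine (sum_le_sum fun i _ => ?_).trans (by simp : ∑ _i ∈ range m, 1 ≤ m)
  exact (natDegree_sub_le _ _).trans (by simpa using natDegree_C_mul_X_pow_le (q⁻¹ ^ i) 1)

lemma qbinomPoly_eval_q_pow_of_lt {m a : ℕ} (h : a < m) : (qbinomPoly m).eval (q ^ a) = 0 := by
  rw [qbinomPoly_eval, prod_eq_zero (mem_range.2 h), mul_zero]
  rw [inv_pow, inv_mul_cancel₀ (pow_ne_zero _ q_ne_zero), sub_self]

lemma qbinomPoly_eval_q_mul (m : ℕ) (t : K) :
    (qbinomPoly (m + 1)).eval (q * t) =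
      (qbinomPoly (m + 1)).eval t - t * (qbinomPoly m).eval t := by
  have hq := q_ne_zero
  have hqm : q ^ (m + 1) - 1 ≠ 0 := sub_ne_zero.2 (q_pow_succ_ne_one m)
  simp only [qbinomPoly_eval, qbinomScale, prod_range_succ' (fun i => 1 - q⁻¹ ^ i * (q * t)),
    prod_range_succ (fun i => 1 - q⁻¹ ^ i * t),
    prod_range_succ (fun i => q ^ i / (q ^ (i + 1) - 1))]
  have hshift : ∀ i, q⁻¹ ^ (i + 1) * (q * t) = q⁻¹ ^ i * t := fun i => by
    rw [pow_succ]; field_simp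
  simp only [hshift, pow_zero, one_mul]
  generalize ∏ i ∈ range m, (1 - q⁻¹ ^ i * t) = A
  generalize ∏ i ∈ range m, q ^ i / (q ^ (i + 1) - 1) = S
  rw [inv_pow]
  field_simp
  ring

lemma Cq_mul_Cq (c d : K) : (Cq c * Cq d : LP N) = Cq (c * d) := by
  simp [Cq, AddMonoidAlgebra.single_mul_single]

lemma Cq_sub (c d : K) : (Cq (c - d) : LP N) = Cq c - Cq d := AddMonoidAlgebra.single_sub _ _ _

lemma Cq_one : (Cq 1 : LP N) = 1 := rfl

lemma Cq_zero : (Cq 0 : LP N) = 0 := AddMonoidAlgebra.single_zero _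

/-- The `q`-binomial theorem, with the coefficients read as polynomials in `q^a`. -/
theorem poch_eq_sum_qbinomPoly (z : LP N) (a : ℕ) :
    poch z a = ∑ m ∈ range (a + 1), Cq ((qbinomPoly m).eval (q ^ a)) * z ^ m := by
  induction a with
  | zero => simp [poch, qbinomPoly_zero, Cq_one]
  | succ a ih =>
    have hpascal : ∀ m, Cq ((qbinomPoly (m + 1)).eval (q ^ (a + 1))) * z ^ (m + 1) =
        Cq ((qbinomPoly (m + 1)).eval (q ^ a)) * z ^ (m + 1) -
          Cq (q ^ a) * z * (Cq ((qbinomPoly m).eval (q ^ a)) * z ^ m) := fun m => by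
      rw [pow_succ' q, qbinomPoly_eval_q_mul, Cq_sub, ← Cq_mul_Cq]
      ring
    have hlow := sum_range_succ' (fun m => Cq ((qbinomPoly m).eval (q ^ a)) * z ^ m) a
    have htop := sum_range_succ (fun m => Cq ((qbinomPoly (m + 1)).eval (q ^ a)) * z ^ (m + 1)) a
    rw [qbinomPoly_eval_q_pow_of_lt (Nat.lt_succ_self a), Cq_zero, zero_mul, add_zero] at htop
    rw [poch, prod_range_succ, ← poch, ih, sum_range_succ' _ (a + 1),
      sum_congr rfl fun m _ => hpascal m, sum_sub_distrib, ← mul_sum, htop, hlow]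
    simp only [qbinomPoly_zero, eval_one, Cq_one, pow_zero, mul_one]
    ring

def ExpBoundedBelow (i : Fin N) (d : ℤ) (F : LP N) : Prop := ∀ m ∈ F.coeff.support, d ≤ m i

namespace ExpBoundedBelow

variable {i : Fin N} {d e : ℤ} {F G : LP N}

lemma single {u : Fin N →₀ ℤ} (h : d ≤ u i) (r : K) :
    ExpBoundedBelow i d (AddMonoidAlgebra.single u r) := fun m hm => by
  rw [AddMonoidAlgebra.coeff_single] at hm
  rwa [Finset.mem_singleton.1 (Finsupp.support_single_subset hm)]

lemma one (hd : d ≤ 0) : ExpBoundedBelow i d (1 : LP N) := single hd 1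

lemma mul (hF : ExpBoundedBelow i d F) (hG : ExpBoundedBelow i e G) :
    ExpBoundedBelow i (d + e) (F * G) := by
  classical
  intro m hm
  obtain ⟨u, hu, v, hv, rfl⟩ := Finset.mem_add.1 (AddMonoidAlgebra.support_coeff_mul_subset F G hm)
  simpa using add_le_add (hF u hu) (hG v hv)

lemma sub (hF : ExpBoundedBelow i d F) (hG : ExpBoundedBelow i d G) :
    ExpBoundedBelow i d (F - G) := by
  classical
  intro m hm
  rcases Finset.mem_union.1 (Finsupp.support_sub hm) with h | h
  exacts [hF m h, hG m h]

lemma prod {ι : Type*} {s : Finset ι} {d : ι → ℤ} {F : ι → LP N}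
    (h : ∀ j ∈ s, ExpBoundedBelow i (d j) (F j)) :
    ExpBoundedBelow i (∑ j ∈ s, d j) (∏ j ∈ s, F j) := by
  classical
  induction s using Finset.cons_induction with
  | empty => exact one le_rfl
  | cons j s hj ih =>
    rw [Finset.prod_cons, Finset.sum_cons]
    exact (h j (Finset.mem_cons_self j s)).mul (ih fun l hl => h l (Finset.mem_cons_of_mem hl))

lemma poch (hF : ExpBoundedBelow i d F) (hd : d ≤ 0) (k : ℕ) :
    ExpBoundedBelow i (k * d) (_root_.poch F k) := by
  have hfactor : ∀ c : K, ExpBoundedBelow i d (1 - Cq c * F) := fun c =>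
    (one hd).sub (by simpa [Cq] using (single (u := 0) le_rfl c).mul hF)
  simpa [_root_.poch] using prod (s := Finset.range k) fun l _ => hfactor (q ^ l)

lemma coeff_eq_zero (hF : ExpBoundedBelow i d F) {m : Fin N →₀ ℤ} (hm : m i < d) :
    F.coeff m = 0 :=
  Finsupp.notMem_support_iff.1 fun h => (hF m h).not_gt hm

end ExpBoundedBelow

lemma Xp_mul_Xi (i j : Fin N) :
    Xp i * Xi j = AddMonoidAlgebra.single (Finsupp.single i 1 + Finsupp.single j (-1)) 1 := by
  rw [Xp, Xi, AddMonoidAlgebra.single_mul_single, one_mul]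

lemma Cq_mul_Xp_mul_Xi (c : K) (i j : Fin N) :
    Cq c * Xp i * Xi j =
      AddMonoidAlgebra.single (Finsupp.single i 1 + Finsupp.single j (-1)) c := by
  rw [mul_assoc, Xp_mul_Xi, Cq, AddMonoidAlgebra.single_mul_single, zero_add, mul_one]

lemma Dn_eq_prod_prod (b : Fin N → ℕ) :
    Dn b = ∏ i, ∏ j, if i < j then
      poch (Xp i * Xi j) (b i) * poch (Cq q * Xp j * Xi i) (b j - 1) else 1 := by
  rw [Dn, prod_filter, ← univ_product_univ, prod_product]

/-- `D_{n-1}` in the variables `x_1, …, x_n`. -/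
def DnTail (a : Fin n → ℕ) : LP (n + 1) :=
  ∏ i : Fin n, ∏ j : Fin n, if i < j then
    poch (Xp i.succ * Xi j.succ) (a i) * poch (Cq q * Xp j.succ * Xi i.succ) (a j - 1) else 1

lemma Dn_cases (a₀ : ℕ) (a : Fin n → ℕ) :
    Dn (Fin.cases (motive := fun _ => ℕ) a₀ a) =
      (∏ j : Fin n, poch (Xp 0 * Xi j.succ) a₀) *
        ((∏ j : Fin n, poch (Cq q * Xp j.succ * Xi 0) (a j - 1)) * DnTail a) := by
  rw [Dn_eq_prod_prod]
  simp [Fin.prod_univ_succ, Fin.succ_pos, DnTail, prod_mul_distrib, mul_assoc]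

lemma expBoundedBelow_DnTail (a : Fin n → ℕ) : ExpBoundedBelow 0 0 (DnTail a) := by
  have hmon : ∀ (c : K) (i j : Fin n), ExpBoundedBelow 0 0
      (AddMonoidAlgebra.single (Finsupp.single i.succ 1 + Finsupp.single j.succ (-1)) c) :=
    fun c i j => .single (by simp [Fin.succ_ne_zero]) c
  rw [DnTail, ← show ∑ _i : Fin n, ∑ _j : Fin n, (0 : ℤ) = 0 by simp]
  refine ExpBoundedBelow.prod fun i _ => ExpBoundedBelow.prod fun j _ => ?_
  split_ifs
  · rw [Xp_mul_Xi, Cq_mul_Xp_mul_Xi]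
    simpa using ((hmon 1 i j).poch le_rfl (a i)).mul ((hmon q j i).poch le_rfl (a j - 1))
  · exact .one le_rfl

lemma expBoundedBelow_prod_poch_Xi_zero (a : Fin n → ℕ) (ha : ∀ i, 1 ≤ a i) :
    ExpBoundedBelow 0 (n - ∑ i, (a i : ℤ))
      (∏ j : Fin n, poch (Cq q * Xp j.succ * Xi 0) (a j - 1)) := by
  have hsum : ∑ j : Fin n, ((a j - 1 : ℕ) : ℤ) * -1 = n - ∑ i, (a i : ℤ) := by
    simp [Nat.cast_sub (ha _), sum_sub_distrib]
  rw [← hsum]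
  refine ExpBoundedBelow.prod fun j _ => ExpBoundedBelow.poch ?_ (by norm_num) _
  rw [Cq_mul_Xp_mul_Xi]
  exact .single (by simp [Fin.succ_ne_zero]) q

abbrev box (n M : ℕ) : Finset (Fin n → ℕ) := Fintype.piFinset fun _ => range (M + 1)

lemma prod_poch_single_eq_sum (e : Fin n → (Fin N →₀ ℤ)) (a₀ : ℕ) :
    ∏ j, poch (AddMonoidAlgebra.single (e j) 1) a₀ =
      ∑ m ∈ box n a₀, AddMonoidAlgebra.single (∑ j, m j • e j)
        (∏ j, (qbinomPoly (m j)).eval (q ^ a₀)) := by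
  simp only [poch_eq_sum_qbinomPoly, AddMonoidAlgebra.single_pow, one_pow, Cq,
    AddMonoidAlgebra.single_mul_single, zero_add, mul_one]
  rw [prod_univ_sum]
  exact sum_congr rfl fun m _ => AddMonoidAlgebra.prod_single _ _ _

lemma CT_single_mul_prod_poch_mul (u : Fin N →₀ ℤ) (e : Fin n → (Fin N →₀ ℤ)) (a₀ : ℕ)
    (G : LP N) :
    CT (AddMonoidAlgebra.single u 1 * (∏ j, poch (AddMonoidAlgebra.single (e j) 1) a₀) * G) =
      ∑ m ∈ box n a₀, (∏ j, (qbinomPoly (m j)).eval (q ^ a₀)) *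
        G.coeff (-(u + ∑ j, m j • e j)) := by
  rw [prod_poch_single_eq_sum, mul_sum, sum_mul, CT, _root_.coeff, AddMonoidAlgebra.coeff_sum,
    Finsupp.finsetSum_apply]
  refine sum_congr rfl fun m _ => ?_
  rw [AddMonoidAlgebra.single_mul_single, one_mul, AddMonoidAlgebra.coeff_single_mul_apply,
    add_zero]

lemma exists_lt_of_notMem_box {M : ℕ} {m : Fin n → ℕ} (hm : m ∉ box n M) : ∃ j, M < m j := by
  simpa [Fintype.mem_piFinset] using hm

lemma box_mono {M M' : ℕ} (h : M ≤ M') : box n M ⊆ box n M' :=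
  Fintype.piFinset_subset _ _ fun _ => range_subset_range.2 (by omega)

theorem exists_polynomial_eval_q_pow (ρ : (Fin n → ℕ) → K) (B : ℤ)
    (hρ : ∀ m, B < ∑ j, (m j : ℤ) → ρ m = 0) :
    ∃ P : K[X], (∀ d ∈ P.support, (d : ℤ) ≤ B) ∧
      ∀ a₀ : ℕ, ∑ m ∈ box n a₀, (∏ j, (qbinomPoly (m j)).eval (q ^ a₀)) * ρ m =
        P.eval (q ^ a₀) := by
  classical
  refine ⟨∑ m ∈ box n B.toNat, C (ρ m) * ∏ j, qbinomPoly (m j), fun d hd => ?_, fun a₀ => ?_⟩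
  · rw [mem_support_iff, finsetSum_coeff] at hd
    obtain ⟨m, -, hm⟩ := exists_ne_zero_of_sum_ne_zero hd
    have hρm : ρ m ≠ 0 := fun h => hm (by simp [h])
    have hdeg : d ≤ ∑ j, m j :=
      calc d ≤ (C (ρ m) * ∏ j, qbinomPoly (m j)).natDegree := le_natDegree_of_ne_zero hm
        _ ≤ ∑ j, (qbinomPoly (m j)).natDegree :=
          (natDegree_C_mul_le _ _).trans (natDegree_prod_le _ _)
        _ ≤ ∑ j, m j := sum_le_sum fun j _ => natDegree_qbinomPoly_le (m j)
    have hsum : ∑ j, (m j : ℤ) ≤ B := not_lt.1 fun h => hρm (hρ m h)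
    exact le_trans (by exact_mod_cast hdeg) hsum
  · rw [eval_finsetSum,
      sum_subset (box_mono (le_max_left a₀ B.toNat)) fun m _ hm => ?_,
      sum_subset (box_mono (le_max_right a₀ B.toNat)) fun m _ hm => ?_]
    · exact sum_congr rfl fun m _ => by simp [eval_prod, mul_comm]
    · obtain ⟨j, hj⟩ := exists_lt_of_notMem_box hm
      have hsum : B < ∑ j, (m j : ℤ) := calc
        B ≤ B.toNat := Int.self_le_toNat B
        _ < m j := by exact_mod_cast hj
        _ ≤ ∑ j, (m j : ℤ) :=
          single_le_sum (f := fun i => (m i : ℤ)) (fun i _ => by positivity) (mem_univ j)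
      simp [hρ m hsum]
    · obtain ⟨j, hj⟩ := exists_lt_of_notMem_box hm
      rw [prod_eq_zero (mem_univ j) (qbinomPoly_eval_q_pow_of_lt hj), zero_mul]

end QDyson

open QDyson in
theorem stmt6_general (n : ℕ) (a : Fin n → ℕ) (ha : ∀ i, 1 ≤ a i)
    (k : ℤ)
    (L : LP (n + 1)) (hL : ∀ m : Fin (n + 1) →₀ ℤ, m 0 ≠ 0 → coeff L m = 0) :
    ∃ P : Polynomial K,
      (∀ d ∈ P.support, (d : ℤ) ≤ (∑ i, a i : ℤ) - k - n) ∧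
      ∀ a₀ : ℕ,
        CT ((AddMonoidAlgebra.single (Finsupp.single (0 : Fin (n + 1)) k) 1 : LP (n + 1)) *
            L * Dn (Fin.cases (motive := fun _ => ℕ) a₀ a)) = P.eval (q ^ a₀) := by
  set e : Fin n → (Fin (n + 1) →₀ ℤ) := fun j => Finsupp.single 0 1 + Finsupp.single j.succ (-1)
  set u := Finsupp.single (0 : Fin (n + 1)) k
  set G := L * ((∏ j : Fin n, poch (Cq q * Xp j.succ * Xi 0) (a j - 1)) * DnTail a)
  have hL0 : ExpBoundedBelow 0 0 L := fun m hm =>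
    (not_not.1 fun h => Finsupp.mem_support_iff.1 hm (hL m h)).ge
  have hG : ExpBoundedBelow 0 (n - ∑ i, (a i : ℤ)) G := by
    simpa using hL0.mul ((expBoundedBelow_prod_poch_Xi_zero a ha).mul (expBoundedBelow_DnTail a))
  obtain ⟨P, hdeg, heval⟩ := exists_polynomial_eval_q_pow
    (fun m => G.coeff (-(u + ∑ j, m j • e j))) ((∑ i, a i : ℤ) - k - n) fun m hm =>
      hG.coeff_eq_zero (by simp [e, u, Fin.succ_ne_zero]; linarith)
  refine ⟨P, hdeg, fun a₀ => ?_⟩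
  have hΦ : ∏ j : Fin n, poch (Xp 0 * Xi j.succ) a₀ =
      ∏ j, poch (AddMonoidAlgebra.single (e j) 1) a₀ := by
    simp only [e, Xp_mul_Xi]
  rw [← heval, ← CT_single_mul_prod_poch_mul, Dn_cases, hΦ]
  congr 1
  ring

/-- Lemma 2.2: for fixed `a_1,…,a_n ≥ 1` and `k ≤ |a|`, the constant term
`CT_x x_0^k L(x_1,…,x_n) D_n(x,a,q)` is a polynomial in `q^{a_0}` of degree at most
`|a| - k - n` (in particular the zero polynomial when `|a| - k - n < 0`).
Independence of `L` from `x_0` is expressed by: every monomial in the support of `L`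
has exponent `0` on `x_0`. -/
theorem stmt6 (n : ℕ) (hn : 1 ≤ n) (a : Fin n → ℕ) (ha : ∀ i, 1 ≤ a i)
    (k : ℤ) (hk : k ≤ (∑ i, a i : ℤ))
    (L : LP (n + 1)) (hL : ∀ m : Fin (n + 1) →₀ ℤ, m 0 ≠ 0 → coeff L m = 0) :
    ∃ P : Polynomial K,
      (∀ d ∈ P.support, (d : ℤ) ≤ (∑ i, a i : ℤ) - k - n) ∧
      ∀ a₀ : ℕ,
        CT ((AddMonoidAlgebra.single (Finsupp.single (0 : Fin (n + 1)) k) 1 : LP (n + 1)) *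
            L * Dn (Fin.cases (motive := fun _ => ℕ) a₀ a)) = P.eval (q ^ a₀) :=
  stmt6_general n a ha k L hL
end
end

section
/- Let s ≥ 1 and let a_1, …, a_s be nonnegative integers. Let k_1, …, k_s be integers satisfying 1 ≤ k_i ≤ a_1 + ⋯ + a_s − 1 for every i with 1 ≤ i ≤ s. Then either there exists an index i with 1 ≤ k_i ≤ a_i − 1, or there exist indices i < j with 1 − a_j ≤ k_i − k_j ≤ a_i − 1. -/
/-- Lemma 3.2: if `1 ≤ k_i ≤ a_1 + ⋯ + a_s - 1` for all `i`, then either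
`1 ≤ k_i ≤ a_i - 1` for some `i`, or `1 - a_j ≤ k_i - k_j ≤ a_i - 1` for some `i < j`. -/
theorem stmt9 (s : ℕ) (hs : 1 ≤ s) (a : Fin s → ℕ) (k : Fin s → ℤ)
    (hk : ∀ i, 1 ≤ k i ∧ k i ≤ (∑ j, (a j : ℤ)) - 1) :
    (∃ i, 1 ≤ k i ∧ k i ≤ (a i : ℤ) - 1) ∨
      (∃ i j, i < j ∧ 1 - (a j : ℤ) ≤ k i - k j ∧ k i - k j ≤ (a i : ℤ) - 1) := by
  by_contra h
  push_neg at h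
  obtain ⟨h1, h2⟩ := h
  have hak : ∀ i, (a i : ℤ) ≤ k i := fun i => by
    have := h1 i (hk i).1
    linarith
  set A : ℤ := ∑ j, (a j : ℤ) with hA
  have h2' : ∀ i j, i ≠ j → k i - k j ≤ (a i : ℤ) - 1 → (1 : ℤ) - a j ≤ k i - k j → False := by
    intro i j hij hle hge
    rcases lt_or_gt_of_ne hij with h' | h'
    · exact absurd hle (not_le.2 (h2 i j h' hge))
    · have := h2 j i h' (by linarith)
      linarith
  let J : Fin s → Finset ℤ := fun i => Finset.Icc (k i - a i + 1) (k i)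
  have hdisj : ∀ i ∈ Finset.univ, ∀ j ∈ Finset.univ, i ≠ j → Disjoint (J i) (J j) := by
    intro i _ j _ hij
    rw [Finset.disjoint_left]
    intro x hxi hxj
    simp only [J, Finset.mem_Icc] at hxi hxj
    exact h2' i j hij (by linarith) (by linarith)
  have hsub : Finset.univ.biUnion J ⊆ Finset.Icc 1 (A - 1) := by
    intro x hx
    simp only [Finset.mem_biUnion, Finset.mem_Icc, J] at hx ⊢
    obtain ⟨i, _, hx1, hx2⟩ := hx
    have := hak i
    have := (hk i).2
    constructor <;> linarith
  have hcard := Finset.card_le_card hsub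
  rw [Finset.card_biUnion hdisj] at hcard
  have hJcard : ∀ i, (J i).card = a i := by
    intro i
    simp [J, Int.card_Icc]
  simp only [hJcard] at hcard
  rw [Int.card_Icc] at hcard
  have hA2 : (2 : ℤ) ≤ A := by
    have h1' := (hk ⟨0, hs⟩).1
    have h2'' := (hk ⟨0, hs⟩).2
    linarith
  have h3 : ((∑ i : Fin s, a i : ℕ) : ℤ) ≤ ((A - 1 + 1 - 1).toNat : ℤ) := by
    exact_mod_cast hcard
  rw [Int.toNat_of_nonneg (by linarith)] at h3
  push_cast at h3
  linarith
end

section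
/- Let n ≥ 3 and let T be a nontransitive tournament on {1,…,n}. Let R_T be the collection of all nonempty subsets R of {1,…,n} with the property that for every r ∈ R and every m ∉ R one has (r,m) ∈ T (i.e. every element of R beats every element outside R). Then |R_T| ≤ n − 2. -/
/-! The dominating sets of an asymmetric relation form a chain under inclusion: if `r ∈ R \ S` and
`s ∈ S \ R`, then `r` beats `s` and `s` beats `r`. A dominating set is closed under "beaten by", so
it contains all or none of a 3-cycle `i → j → k → i`. Deleting `j` and `k` therefore maps the
nonempty dominating sets injectively to a chain of nonempty subsets of an `(n - 2)`-element set,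
and such a chain has distinct cardinalities in `[1, n - 2]`. -/

open Finset

variable {α : Type*}

theorem Finset.card_le_card_of_isChain {s : Finset α} {𝒜 : Finset (Finset α)}
    (hchain : IsChain (· ⊆ ·) (𝒜 : Set (Finset α))) (hne : ∀ A ∈ 𝒜, A.Nonempty)
    (hsub : ∀ A ∈ 𝒜, A ⊆ s) : #𝒜 ≤ #s := by
  have hinj : Set.InjOn card (𝒜 : Set (Finset α)) := by
    intro A hA B hB hAB
    rcases hchain.total hA hB with h | h
    · exact eq_of_subset_of_card_le h hAB.ge
    · exact (eq_of_subset_of_card_le h hAB.le).symm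
  calc #𝒜 ≤ #(Icc 1 #s) :=
        card_le_card_of_injOn card
          (fun A hA => mem_Icc.2 ⟨(hne A hA).card_pos, card_le_card (hsub A hA)⟩) hinj
    _ = #s := by simp

def IsDominating (beats : α → α → Prop) (R : Finset α) : Prop :=
  ∀ r ∈ R, ∀ m ∉ R, beats r m

namespace IsDominating

variable {beats : α → α → Prop} {R S : Finset α}

theorem mem_of_beats (hasymm : ∀ ⦃a b⦄, beats a b → ¬ beats b a) (hR : IsDominating beats R)
    {a b : α} (ha : a ∈ R) (hba : beats b a) : b ∈ R := by
  by_contra hb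
  exact hasymm (hR a ha b hb) hba

theorem subset_or_subset (hasymm : ∀ ⦃a b⦄, beats a b → ¬ beats b a)
    (hR : IsDominating beats R) (hS : IsDominating beats S) : R ⊆ S ∨ S ⊆ R := by
  by_contra! h
  obtain ⟨r, hrR, hrS⟩ := not_subset.1 h.1
  obtain ⟨s, hsS, hsR⟩ := not_subset.1 h.2
  exact hrS (hS.mem_of_beats hasymm hsS (hR r hrR s hsR))

section Cycle

variable [DecidableEq α] (hasymm : ∀ ⦃a b⦄, beats a b → ¬ beats b a) {i j k : α}
  (hij : beats i j) (hjk : beats j k) (hki : beats k i)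
include hasymm hij hjk hki

theorem mem_iff_of_mem_pair (hR : IsDominating beats R) {x : α} (hx : x ∈ ({j, k} : Finset α)) :
    x ∈ R ↔ i ∈ R := by
  have hj : j ∈ R → i ∈ R := fun h => hR.mem_of_beats hasymm h hij
  have hk : k ∈ R → j ∈ R := fun h => hR.mem_of_beats hasymm h hjk
  have hi : i ∈ R → k ∈ R := fun h => hR.mem_of_beats hasymm h hki
  rcases mem_insert.1 hx with rfl | hx
  · exact ⟨hj, hk ∘ hi⟩
  rw [mem_singleton.1 hx]
  exact ⟨hj ∘ hk, hi⟩

theorem sdiff_pair_nonempty (hi : i ∉ ({j, k} : Finset α)) (hR : IsDominating beats R)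
    (hne : R.Nonempty) : (R \ {j, k}).Nonempty := by
  obtain ⟨x, hx⟩ := hne
  by_cases hxjk : x ∈ ({j, k} : Finset α)
  · exact ⟨i, mem_sdiff.2 ⟨(hR.mem_iff_of_mem_pair hasymm hij hjk hki hxjk).1 hx, hi⟩⟩
  · exact ⟨x, mem_sdiff.2 ⟨hx, hxjk⟩⟩

theorem eq_of_sdiff_pair_eq (hi : i ∉ ({j, k} : Finset α)) (hR : IsDominating beats R)
    (hS : IsDominating beats S) (h : R \ {j, k} = S \ {j, k}) : R = S := by
  have hmem : ∀ x ∉ ({j, k} : Finset α), x ∈ R ↔ x ∈ S := fun x hx => by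
    simpa [hx] using congrArg (x ∈ ·) h
  ext x
  by_cases hx : x ∈ ({j, k} : Finset α)
  · rw [hR.mem_iff_of_mem_pair hasymm hij hjk hki hx,
      hS.mem_iff_of_mem_pair hasymm hij hjk hki hx, hmem i hi]
  · exact hmem x hx

end Cycle

end IsDominating

theorem stmt10_general (n : ℕ) (T : Finset (Fin n × Fin n))
    (hTirr : ∀ i : Fin n, (i, i) ∉ T)
    (hT : ∀ i j : Fin n, i ≠ j → ((i, j) ∈ T ↔ (j, i) ∉ T))
    (hnt : ∃ i j k : Fin n, (i, j) ∈ T ∧ (j, k) ∈ T ∧ (k, i) ∈ T) :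
    (Finset.univ.filter (fun R : Finset (Fin n) =>
        R.Nonempty ∧ ∀ r ∈ R, ∀ m ∉ R, (r, m) ∈ T)).card ≤ n - 2 := by
  set beats : Fin n → Fin n → Prop := fun a b => (a, b) ∈ T
  have hasymm : ∀ ⦃a b⦄, beats a b → ¬ beats b a := fun a b hab => by
    rcases eq_or_ne a b with rfl | hne
    exacts [absurd hab (hTirr a), (hT a b hne).1 hab]
  obtain ⟨i, j, k, hij, hjk, hki⟩ := hnt
  have hi : i ∉ ({j, k} : Finset (Fin n)) := by
    simp only [mem_insert, mem_singleton, not_or]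
    exact ⟨by rintro rfl; exact hTirr i hij, by rintro rfl; exact hTirr i hki⟩
  have hjk_ne : j ≠ k := by rintro rfl; exact hTirr j hjk
  set 𝒟 := univ.filter fun R : Finset (Fin n) => R.Nonempty ∧ ∀ r ∈ R, ∀ m ∉ R, (r, m) ∈ T
  have hdom : ∀ R ∈ 𝒟, R.Nonempty ∧ IsDominating beats R := fun R hR => (mem_filter.1 hR).2
  calc #𝒟 = #(𝒟.image (· \ {j, k})) :=
        (card_image_of_injOn fun R hR S hS h =>
          (hdom R hR).2.eq_of_sdiff_pair_eq hasymm hij hjk hki hi (hdom S hS).2 h).symm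
    _ ≤ #(univ \ {j, k}) := by
      apply card_le_card_of_isChain
      · rw [coe_image]
        refine IsChain.image_of_map_rel _ _ _ (fun _ _ h => sdiff_subset_sdiff h subset_rfl) ?_
        exact fun R hR S hS _ => (hdom R hR).2.subset_or_subset hasymm (hdom S hS).2
      all_goals simp only [mem_image, forall_exists_index, and_imp, forall_apply_eq_imp_iff₂]
      · exact fun R hR => (hdom R hR).2.sdiff_pair_nonempty hasymm hij hjk hki hi (hdom R hR).1
      · exact fun R _ => sdiff_subset_sdiff (subset_univ R) subset_rfl
    _ = n - 2 := by simp [card_univ_sdiff, hjk_ne]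

/-- Lemma 3.4: a nontransitive tournament `T` on `{1,…,n}` (here modelled on `Fin n`)
has at most `n - 2` "dominant" nonempty vertex subsets `R` (every element of `R` beats
every element outside `R`). -/
theorem stmt10 (n : ℕ) (hn : 3 ≤ n) (T : Finset (Fin n × Fin n))
    (hTirr : ∀ i : Fin n, (i, i) ∉ T)
    (hT : ∀ i j : Fin n, i ≠ j → ((i, j) ∈ T ↔ (j, i) ∉ T))
    (hnt : ∃ i j k : Fin n, (i, j) ∈ T ∧ (j, k) ∈ T ∧ (k, i) ∈ T) :
    (Finset.univ.filter (fun R : Finset (Fin n) =>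
        R.Nonempty ∧ ∀ r ∈ R, ∀ m ∉ R, (r, m) ∈ T)).card ≤ n - 2 :=
  stmt10_general n T hTirr hT hnt
end

section
/- (Dixon's identity) For every positive integer n, ∑_{k=−n}^{n} (−1)^k · (C(2n, n+k))^3 = (3n)! / (n!)^3, where C(2n, n+k) denotes the binomial coefficient '2n choose n+k'. -/
/-!
The sums `S n = ∑ₖ (-1)^k C(2n, k)^3` satisfy the first-order recurrence
`(n + 1)^2 S (n + 1) = -3 (3n + 1) (3n + 2) S n`, which together with `S 0 = 1` forces
`S n = (-1)^n (3n)! / (n!)^3`. The recurrence is proved by creative telescoping: the summand of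
`(n + 1)^2 S (n + 1) + 3 (3n + 1) (3n + 2) S n` is `G n (k + 1) - G n k` for an explicit
(Wilf–Zeilberger) certificate `G`, whose boundary values vanish. Shifting `k` by `n` turns the
symmetric sum of the theorem into `(-1)^n S n`.
-/

open Finset

theorem Nat.cast_choose_succ_right_mul {R : Type*} [CommRing R] (m k : ℕ) :
    (m.choose (k + 1) : R) * (k + 1) = m.choose k * (m - k) := by
  rcases le_or_gt k m with hk | hk
  · simpa [Nat.cast_sub hk] using congrArg (Nat.cast : ℕ → R) (Nat.choose_succ_right_eq m k)
  · simp [Nat.choose_eq_zero_of_lt hk, Nat.choose_eq_zero_of_lt (Nat.lt_succ_of_lt hk)]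

theorem Nat.cast_choose_mul_succ {R : Type*} [CommRing R] (m k : ℕ) :
    (m.choose k : R) * (m + 1) = (m + 1).choose k * (m + 1 - k) := by
  rcases le_or_gt k (m + 1) with hk | hk
  · simpa [Nat.cast_sub hk] using congrArg (Nat.cast : ℕ → R) (Nat.choose_mul_succ_eq m k)
  · simp [Nat.choose_eq_zero_of_lt hk, Nat.choose_eq_zero_of_lt (Nat.lt_of_succ_lt hk)]

theorem Finset.sum_Icc_neg_natCast {M : Type*} [AddCommMonoid M] (n : ℕ) (f : ℤ → M) :
    ∑ k ∈ Icc (-(n : ℤ)) n, f k = ∑ j ∈ range (2 * n + 1), f (j - n) := by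
  refine sum_nbij' (fun k ↦ (k + n).toNat) (fun j ↦ (j : ℤ) - n) ?_ ?_ ?_ ?_ ?_ <;>
    intro k hk <;> simp only [mem_Icc, mem_range] at hk ⊢
  any_goals omega
  congr 1
  omega

theorem neg_one_zpow_natCast_sub {K : Type*} [DivisionRing K] (m n : ℕ) :
    (-1 : K) ^ ((m : ℤ) - n) = (-1) ^ n * (-1) ^ m := by
  rw [zpow_sub₀ (neg_ne_zero.mpr one_ne_zero), zpow_natCast, zpow_natCast]
  rcases neg_one_pow_eq_or K n with h | h <;> simp [h, div_neg]

namespace Dixon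

def term (n k : ℕ) : ℚ := (-1) ^ k * ((2 * n).choose k : ℚ) ^ 3

def sum (n : ℕ) : ℚ := ∑ k ∈ range (2 * n + 1), term n k

def certificatePoly (n k : ℚ) : ℚ :=
  (-116 + 207*k - 147*k^2 + 48*k^3 - 6*k^4)
  + n * (-784 + 1113*k - 594*k^2 + 132*k^3 - 9*k^4)
  + n^2 * (-2084 + 2214*k - 792*k^2 + 90*k^3)
  + n^3 * (-2728 + 1932*k - 348*k^2)
  + n^4 * (-1760 + 624*k)
  + n^5 * (-448)

-- Found by Zeilberger's algorithm; the factor `k ^ 3` makes it vanish at `k = 0`.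
def certificate (n k : ℕ) : ℚ :=
  (-1) ^ k * ((k : ℚ) * (2 * n + 2).choose k) ^ 3 * certificatePoly n k /
    (2 * (2 * n + 1) ^ 3 * (2 * n + 2) ^ 3)

theorem certificate_succ_sub (n k : ℕ) :
    certificate n (k + 1) - certificate n k =
      ((n : ℚ) + 1) ^ 2 * term (n + 1) k + 3 * (3 * n + 1) * (3 * n + 2) * term n k := by
  -- Every binomial coefficient involved is a rational multiple of `C(2n + 2, k)`.
  have hnext : ((k + 1 : ℕ) : ℚ) * (2 * n + 2).choose (k + 1) =
      (2 * n + 2).choose k * (2 * n + 2 - k) := by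
    push_cast
    rw [mul_comm]
    exact_mod_cast Nat.cast_choose_succ_right_mul (R := ℚ) (2 * n + 2) k
  have hprev : ((2 * n).choose k : ℚ) =
      (2 * n + 2).choose k * (2 * n + 2 - k) * (2 * n + 1 - k) / ((2 * n + 1) * (2 * n + 2)) := by
    have h1 := Nat.cast_choose_mul_succ (R := ℚ) (2 * n) k
    have h2 := Nat.cast_choose_mul_succ (R := ℚ) (2 * n + 1) k
    push_cast at h1 h2
    rw [eq_div_iff (by positivity)]
    linear_combination (2 * (n : ℚ) + 2) * h1 + (2 * (n : ℚ) + 1 - k) * h2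
  simp only [certificate, term, hnext, hprev, pow_succ (-1 : ℚ) k]
  rw [show 2 * (n + 1) = 2 * n + 2 by ring]
  unfold certificatePoly
  push_cast
  field_simp
  ring

theorem sum_range_add_three (n : ℕ) : ∑ k ∈ range (2 * n + 3), term n k = sum n := by
  have h : (2 * n).choose (2 * n + 2) = 0 := Nat.choose_eq_zero_of_lt (by omega)
  simp [sum_range_succ, sum, term, h]

theorem sum_recurrence (n : ℕ) :
    ((n : ℚ) + 1) ^ 2 * sum (n + 1) + 3 * (3 * n + 1) * (3 * n + 2) * sum n = 0 := by
  have htel := sum_range_sub (certificate n) (2 * n + 3)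
  have hlast : (2 * n + 2).choose (2 * n + 3) = 0 := Nat.choose_eq_zero_of_lt (by omega)
  simp only [certificate_succ_sub, sum_add_distrib, ← mul_sum, sum_range_add_three] at htel
  simpa [certificate, hlast, sum, show 2 * (n + 1) + 1 = 2 * n + 3 by ring] using htel

theorem sum_eq (n : ℕ) : sum n = (-1) ^ n * (3 * n).factorial / (n.factorial : ℚ) ^ 3 := by
  induction n with
  | zero => simp [sum, term]
  | succ n ih =>
    have hrec := sum_recurrence n
    rw [ih] at hrec
    field_simp at hrec
    rw [show 3 * (n + 1) = 3 * n + 2 + 1 by ring, Nat.factorial_succ, Nat.factorial_succ,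
      Nat.factorial_succ, Nat.factorial_succ]
    field_simp
    push_cast
    linear_combination ((n : ℚ) + 1) * hrec

end Dixon

theorem stmt14_general (n : ℕ) :
    ∑ k ∈ Finset.Icc (-(n : ℤ)) (n : ℤ),
        (-1 : ℚ) ^ k * (Nat.choose (2 * n) ((n : ℤ) + k).toNat : ℚ) ^ 3 =
      (Nat.factorial (3 * n) : ℚ) / (Nat.factorial n : ℚ) ^ 3 := by
  calc ∑ k ∈ Icc (-(n : ℤ)) n, (-1 : ℚ) ^ k * ((2 * n).choose ((n : ℤ) + k).toNat : ℚ) ^ 3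
      = ∑ j ∈ range (2 * n + 1), (-1) ^ n * Dixon.term n j := by
        rw [sum_Icc_neg_natCast]
        refine sum_congr rfl fun j _ ↦ ?_
        rw [neg_one_zpow_natCast_sub, Dixon.term, add_sub_cancel, Int.toNat_natCast]
        ring
    _ = ((-1) ^ n * (-1) ^ n) * (3 * n).factorial / (n.factorial : ℚ) ^ 3 := by
        rw [← mul_sum, ← Dixon.sum, Dixon.sum_eq]
        ring
    _ = (3 * n).factorial / (n.factorial : ℚ) ^ 3 := by
        rw [← mul_pow]
        norm_num

/-- Dixon's identity: `∑_{k=-n}^{n} (-1)^k C(2n, n+k)^3 = (3n)!/(n!)^3`. -/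
theorem stmt14 (n : ℕ) (hn : 1 ≤ n) :
    ∑ k ∈ Finset.Icc (-(n : ℤ)) (n : ℤ),
        (-1 : ℚ) ^ k * (Nat.choose (2 * n) ((n : ℤ) + k).toNat : ℚ) ^ 3 =
      (Nat.factorial (3 * n) : ℚ) / (Nat.factorial n : ℚ) ^ 3 :=
  stmt14_general n
end
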